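/- arXiv:2110.03641 — 7 statements merged into one kernel-verified Lean document; each statement's English description precedes it below -/
import Mathlib

section
/- Let σ be a finite signed measure on [0,∞) such that ∫(ax+b) dσ = 0 for every affine function. Then the following are equivalent: (1) ∫φ dσ ≥ 0 for every convex φ : [0,∞) → ℝ; (2) for all t ≥ 0, ∫_t^∞ σ((λ,∞)) dλ ≥ 0; (3) for all t ≥ 0, ∫ max(x−t,0) dσ(x) ≥ 0. -/
/-!
The layer cake formula `∫ (x - t)⁺ dμ = ∫_t^∞ μ (λ, ∞) dλ` gives (2) ⇔ (3), and hinges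
`(x - t)⁺` are convex, which gives (1) ⇒ (3).

For (3) ⇒ (1), a convex `φ` on `[0, ∞)` is, on `(0, ∞)`, the increasing limit of the maxima of
its right tangent lines at finitely many points of a dense sequence. Adding the tangent points in
increasing order, each new maximum is the previous one plus `c (x - t)⁺` with `c, t ≥ 0`, so every
such maximum is an affine function plus a nonnegative combination of hinges at `t ≥ 0`, and its
integral against `σ` is nonnegative. At `0` the function `φ` may jump above the limit of the
tangents; the jump is the limit of the bumps `(1 - n x)⁺`, which are again affine plus a hinge.
Dominated convergence passes to the limit.
-/

open MeasureTheory Set Filter Topology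

section LayerCake

variable (μ : Measure ℝ)

lemma measurable_measure_Ioi : Measurable fun l : ℝ => μ (Ioi l) :=
  Antitone.measurable fun _ _ h => measure_mono (Ioi_subset_Ioi h)

lemma lintegral_max_sub_eq_lintegral_measure_Ioi (t : ℝ) :
    ∫⁻ x, ENNReal.ofReal (max (x - t) 0) ∂μ = ∫⁻ l in Ioi t, μ (Ioi l) := by
  rw [lintegral_eq_lintegral_meas_lt μ (f := fun x => max (x - t) 0)
    (ae_of_all _ fun x => le_max_right _ _) (by fun_prop)]
  have hlevel : ∀ s ∈ Ioi (0 : ℝ), μ {x | s < max (x - t) 0} = μ (Ioi (t + s)) := by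
    intro s (hs : 0 < s)
    congr 1
    ext x
    simp only [mem_ofPred_eq, mem_Ioi, lt_max_iff, not_lt_of_gt hs, or_false]
    constructor <;> intro h <;> linarith
  have hshift := (measurePreserving_add_left volume t).setLIntegral_comp_preimage_emb
    (measurableEmbedding_addLeft t) (fun l => μ (Ioi l)) (Ioi t)
  rw [setLIntegral_congr_fun measurableSet_Ioi hlevel, ← hshift, preimage_const_add_Ioi, sub_self]

variable {μ} [IsFiniteMeasure μ]

lemma integral_max_sub_eq_integral_measureReal_Ioi (t : ℝ) :
    ∫ x, max (x - t) 0 ∂μ = ∫ l in Ioi t, μ.real (Ioi l) := by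
  rw [integral_eq_lintegral_of_nonneg_ae (f := fun x => max (x - t) 0)
      (ae_of_all _ fun x => le_max_right _ _) (by fun_prop),
    lintegral_max_sub_eq_lintegral_measure_Ioi]
  exact (integral_toReal (measurable_measure_Ioi μ).aemeasurable
    (ae_of_all _ fun _ => measure_lt_top μ _)).symm

lemma integrable_max_sub_const (hint : Integrable (fun x : ℝ => x) μ) (t : ℝ) :
    Integrable (fun x => max (x - t) 0) μ :=
  (hint.sub (integrable_const t)).sup (integrable_const 0)

lemma integrableOn_measureReal_Ioi (hint : Integrable (fun x : ℝ => x) μ) (t : ℝ) :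
    IntegrableOn (fun l => μ.real (Ioi l)) (Ioi t) := by
  refine integrable_toReal_of_lintegral_ne_top (measurable_measure_Ioi μ).aemeasurable ?_
  rw [← lintegral_max_sub_eq_lintegral_measure_Ioi]
  exact (integrable_max_sub_const hint t).lintegral_lt_top.ne

end LayerCake

lemma convexOn_max_sub_const (t : ℝ) : ConvexOn ℝ univ (fun x : ℝ => max (x - t) 0) :=
  ((convexOn_id convex_univ).sub (concaveOn_const t convex_univ)).sup
    (convexOn_const 0 convex_univ)

noncomputable def rightTangent (f : ℝ → ℝ) (q x : ℝ) : ℝ :=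
  f q + derivWithin f (Ioi q) q * (x - q)

namespace ConvexOn

variable {S : Set ℝ} {f : ℝ → ℝ} {a b q x : ℝ}

lemma rightTangent_le (hf : ConvexOn ℝ S f) (hq : q ∈ interior S) (hx : x ∈ S) :
    rightTangent f q x ≤ f x := by
  unfold rightTangent
  rcases lt_trichotomy x q with hxq | rfl | hqx
  · have h := (hf.slope_le_leftDeriv_of_mem_interior hx hq hxq).trans
      (hf.leftDeriv_le_rightDeriv_of_mem_interior hq)
    rw [slope_def_field, div_le_iff₀ (sub_pos.2 hxq)] at h
    nlinarith
  · simp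
  · have h := hf.rightDeriv_le_slope_of_mem_interior hq hx hqx
    rw [slope_def_field, le_div_iff₀ (sub_pos.2 hqx)] at h
    linarith

lemma rightTangent_le_rightTangent (hf : ConvexOn ℝ S f) (hq : q ∈ interior S)
    (hb : b ∈ interior S) (hqb : q ≤ b) (hbx : b ≤ x) :
    rightTangent f q x ≤ rightTangent f b x := by
  have htan : rightTangent f q b ≤ f b := hf.rightTangent_le hq (interior_subset hb)
  have hslope := hf.monotoneOn_rightDeriv hq hb hqb
  simp only [rightTangent] at htan hslope ⊢
  nlinarith

lemma exists_max_rightTangent_sub_eq (hf : ConvexOn ℝ S f) (hb : b ∈ interior S)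
    (ha : a ∈ interior S) (hba : b < a) :
    ∃ c ≥ 0, ∃ t ≥ b, ∀ x,
      max (rightTangent f a x - rightTangent f b x) 0 = c * max (x - t) 0 := by
  set c := derivWithin f (Ioi a) a - derivWithin f (Ioi b) b
  set d := rightTangent f a b - f b
  have hc : 0 ≤ c := sub_nonneg.2 (hf.monotoneOn_rightDeriv hb ha hba.le)
  have hd : d ≤ 0 := sub_nonpos.2 (hf.rightTangent_le ha (interior_subset hb))
  refine ⟨c, hc, b - d / c, (le_sub_self_iff b).2 (div_nonpos_of_nonpos_of_nonneg hd hc),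
    fun x => ?_⟩
  have hdiff : rightTangent f a x - rightTangent f b x = c * (x - b) + d := by
    simp only [c, d, rightTangent]; ring
  rw [hdiff]
  rcases hc.eq_or_lt with hc0 | hcpos
  · simp [← hc0, hd]
  · rw [mul_max_of_nonneg _ _ hc, mul_zero]
    congr 1
    field_simp
    ring

lemma exists_sup'_insert_rightTangent_eq (hf : ConvexOn ℝ S f) {s : Finset ℝ}
    (hs : s.Nonempty) (hsS : ∀ q ∈ s, q ∈ interior S) (ha : a ∈ interior S)
    (hsa : ∀ q ∈ s, q < a) :
    ∃ c ≥ 0, ∃ t ≥ s.max' hs, ∀ x,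
      (insert a s).sup' (s.insert_nonempty a) (rightTangent f · x) =
        s.sup' hs (rightTangent f · x) + c * max (x - t) 0 := by
  set b := s.max' hs
  have hbs : b ∈ s := s.max'_mem hs
  obtain ⟨c, hc, t, hbt, hmax⟩ :=
    hf.exists_max_rightTangent_sub_eq (hsS b hbs) ha (hsa b hbs)
  refine ⟨c, hc, t, hbt, fun x => ?_⟩
  rw [Finset.sup'_insert hs, ← hmax]
  have hb_le : rightTangent f b x ≤ s.sup' hs (rightTangent f · x) :=
    Finset.le_sup' (rightTangent f · x) hbs
  by_cases hab : rightTangent f a x ≤ rightTangent f b x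
  · rw [max_eq_right (hab.trans hb_le), max_eq_right (sub_nonpos.2 hab), add_zero]
  · push Not at hab
    -- past the kink `t ≥ b`, the tangent at `b` dominates the tangents at all `q ≤ b`
    have hxt : b ≤ x := by
      have hpos : 0 < c * max (x - t) 0 := by
        rw [← hmax]; exact lt_max_of_lt_left (sub_pos.2 hab)
      have : 0 < max (x - t) 0 := pos_of_mul_pos_right hpos hc
      rw [lt_max_iff] at this
      rcases this with h | h <;> linarith
    have hsup : s.sup' hs (rightTangent f · x) = rightTangent f b x :=
      le_antisymm (Finset.sup'_le _ _ fun q hq => hf.rightTangent_le_rightTangent (hsS q hq)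
        (hsS b hbs) (s.le_max' q hq) hxt) hb_le
    rw [hsup, max_eq_left hab.le, max_eq_left (sub_pos.2 hab).le]
    ring

lemma tendsto_rightTangent_nhdsLT (hf : ConvexOn ℝ S f) (hx : x ∈ interior S) :
    Tendsto (fun q => rightTangent f q x) (𝓝[<] x) (𝓝 (f x)) := by
  obtain ⟨l, hlx, hl⟩ := exists_Ioc_subset_of_mem_nhds (isOpen_interior.mem_nhds hx)
    ⟨x - 1, sub_one_lt x⟩
  obtain ⟨x', hlx', hx'x⟩ := exists_between hlx
  have hx' : x' ∈ interior S := hl ⟨hlx', hx'x.le⟩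
  set m := derivWithin f (Ioi x') x'
  have hcont : Tendsto (fun q => f q + m * (x - q)) (𝓝[<] x) (𝓝 (f x + m * (x - x))) :=
    ((hf.continuousOn_interior.continuousAt (isOpen_interior.mem_nhds hx)).tendsto.add
      (tendsto_const_nhds.mul (tendsto_const_nhds.sub tendsto_id))).mono_left
      nhdsWithin_le_nhds
  rw [sub_self, mul_zero, add_zero] at hcont
  refine tendsto_of_tendsto_of_tendsto_of_le_of_le' hcont tendsto_const_nhds ?_ ?_
  · filter_upwards [Ioo_mem_nhdsLT hx'x] with q ⟨hx'q, hqx⟩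
    have hslope : m ≤ derivWithin f (Ioi q) q :=
      hf.monotoneOn_rightDeriv hx' (hl ⟨hlx'.trans hx'q, hqx.le⟩) hx'q.le
    simp only [rightTangent]
    nlinarith
  · filter_upwards [Ioo_mem_nhdsLT hx'x] with q hq
    exact hf.rightTangent_le (hl ⟨hlx'.trans hq.1, hq.2.le⟩) (interior_subset hx)

end ConvexOn

def IntegralLE {α : Type*} [MeasurableSpace α] (μ ν : Measure α) (g : α → ℝ) : Prop :=
  Integrable g μ ∧ Integrable g ν ∧ ∫ x, g x ∂μ ≤ ∫ x, g x ∂ν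

namespace IntegralLE

variable {α : Type*} [MeasurableSpace α] {μ ν : Measure α} {g h : α → ℝ}

lemma add (hg : IntegralLE μ ν g) (hh : IntegralLE μ ν h) :
    IntegralLE μ ν (fun x => g x + h x) := by
  refine ⟨hg.1.add hh.1, hg.2.1.add hh.2.1, ?_⟩
  rw [integral_add hg.1 hh.1, integral_add hg.2.1 hh.2.1]
  exact add_le_add hg.2.2 hh.2.2

lemma const_mul (hg : IntegralLE μ ν g) {c : ℝ} (hc : 0 ≤ c) :
    IntegralLE μ ν (fun x => c * g x) := by
  refine ⟨hg.1.const_mul c, hg.2.1.const_mul c, ?_⟩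
  rw [integral_const_mul, integral_const_mul]
  exact mul_le_mul_of_nonneg_left hg.2.2 hc

lemma integral_le_of_tendsto {s : Set α} (hμ : ∀ᵐ x ∂μ, x ∈ s) (hν : ∀ᵐ x ∂ν, x ∈ s)
    {F : ℕ → α → ℝ} {f : α → ℝ} (hF : ∀ n, IntegralLE μ ν (F n)) (bound : α → ℝ)
    (hbμ : Integrable bound μ) (hbν : Integrable bound ν)
    (h_bound : ∀ n, ∀ x ∈ s, ‖F n x‖ ≤ bound x)
    (h_lim : ∀ x ∈ s, Tendsto (F · x) atTop (𝓝 (f x))) :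
    ∫ x, f x ∂μ ≤ ∫ x, f x ∂ν := by
  have key : ∀ ρ : Measure α, (∀ n, Integrable (F n) ρ) → Integrable bound ρ →
      (∀ᵐ x ∂ρ, x ∈ s) → Tendsto (fun n => ∫ x, F n x ∂ρ) atTop (𝓝 (∫ x, f x ∂ρ)) :=
    fun ρ hFρ hbρ hρ => tendsto_integral_of_dominated_convergence bound
      (fun n => (hFρ n).aestronglyMeasurable) hbρ
      (fun n => hρ.mono fun x hx => h_bound n x hx) (hρ.mono h_lim)
  exact le_of_tendsto_of_tendsto' (key μ (fun n => (hF n).1) hbμ hμ)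
    (key ν (fun n => (hF n).2.1) hbν hν) fun n => (hF n).2.2

end IntegralLE

noncomputable def posDenseSeq (i : ℕ) : ℝ := TopologicalSpace.denseSeq (Ioi (0 : ℝ)) i

lemma posDenseSeq_pos (i : ℕ) : 0 < posDenseSeq i :=
  (TopologicalSpace.denseSeq (Ioi (0 : ℝ)) i).2

lemma exists_posDenseSeq_mem_Ioo {l x : ℝ} (hlx : l < x) (hx : 0 < x) :
    ∃ i, posDenseSeq i ∈ Ioo l x := by
  obtain ⟨y, hly, hyx⟩ := exists_between (max_lt hlx hx)
  exact (TopologicalSpace.denseRange_denseSeq _).exists_mem_open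
    (isOpen_Ioo.preimage continuous_subtype_val)
    ⟨⟨y, (le_max_right l 0).trans_lt hly⟩, (le_max_left l 0).trans_lt hly, hyx⟩

noncomputable def tangentApprox (φ : ℝ → ℝ) (n : ℕ) (x : ℝ) : ℝ :=
  ((Finset.range (n + 1)).image posDenseSeq).sup' (by simp) (rightTangent φ · x)

section TangentApprox

variable {φ : ℝ → ℝ} {n : ℕ} {x : ℝ}

lemma rightTangent_le_tangentApprox {i : ℕ} (hi : i ≤ n) :
    rightTangent φ (posDenseSeq i) x ≤ tangentApprox φ n x :=
  Finset.le_sup' (rightTangent φ · x)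
    (Finset.mem_image_of_mem _ (Finset.mem_range.2 (Nat.lt_succ_of_le hi)))

lemma monotone_tangentApprox : Monotone (tangentApprox φ · x) := fun _ _ hnm =>
  Finset.sup'_mono _ (Finset.image_subset_image (Finset.range_subset_range.2 (by omega))) _

lemma ConvexOn.tangentApprox_le (hφ : ConvexOn ℝ (Ici 0) φ) (hx : 0 ≤ x) :
    tangentApprox φ n x ≤ φ x :=
  Finset.sup'_le _ _ fun q hq => by
    obtain ⟨i, -, rfl⟩ := Finset.mem_image.1 hq
    exact hφ.rightTangent_le (by simpa using posDenseSeq_pos i) hx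

lemma ConvexOn.tendsto_tangentApprox (hφ : ConvexOn ℝ (Ici 0) φ) (hx : 0 < x) :
    Tendsto (tangentApprox φ · x) atTop (𝓝 (φ x)) := by
  refine tendsto_order.2 ⟨fun b hb => ?_, fun b hb =>
    Eventually.of_forall fun n => (hφ.tangentApprox_le hx.le).trans_lt hb⟩
  have hx' : x ∈ interior (Ici (0 : ℝ)) := by simpa using hx
  obtain ⟨l, hlx, hl⟩ := mem_nhdsLT_iff_exists_Ioo_subset.1
    ((hφ.tendsto_rightTangent_nhdsLT hx').eventually (lt_mem_nhds hb))
  obtain ⟨i, hi⟩ := exists_posDenseSeq_mem_Ioo hlx hx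
  exact eventually_atTop.2 ⟨i, fun n hn => (hl hi).trans_le (rightTangent_le_tangentApprox hn)⟩

end TangentApprox

lemma tendsto_max_one_sub_mul_atTop {x : ℝ} (hx : 0 < x) :
    Tendsto (fun n : ℕ => max (1 - (n + 1 : ℝ) * x) 0) atTop (𝓝 0) := by
  refine tendsto_const_nhds.congr' ?_
  filter_upwards [(tendsto_natCast_atTop_atTop.atTop_mul_const hx).eventually_ge_atTop x⁻¹]
    with n hn
  rw [max_eq_right]
  nlinarith [mul_inv_cancel₀ hx.ne']

section ConvexOrder

variable {μ ν : Measure ℝ}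
  (haff : ∀ a b : ℝ, IntegralLE μ ν (fun x => a * x + b))
  (hhinge : ∀ t : ℝ, 0 ≤ t → IntegralLE μ ν (fun x => max (x - t) 0))

include haff

lemma integralLE_rightTangent (φ : ℝ → ℝ) (q : ℝ) : IntegralLE μ ν (rightTangent φ q) := by
  convert haff (derivWithin φ (Ioi q) q) (φ q - derivWithin φ (Ioi q) q * q) using 2
  simp only [rightTangent]
  ring

include hhinge

lemma integralLE_sup'_rightTangent {φ : ℝ → ℝ} (hφ : ConvexOn ℝ (Ici 0) φ) (s : Finset ℝ)
    (hs : s.Nonempty) (hpos : ∀ q ∈ s, 0 < q) :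
    IntegralLE μ ν (fun x => s.sup' hs (rightTangent φ · x)) := by
  induction s using Finset.induction_on_max with
  | empty => exact absurd hs Finset.not_nonempty_empty
  | insert a s hlt ih =>
    have hint : ∀ q ∈ insert a s, q ∈ interior (Ici (0 : ℝ)) := by simpa using hpos
    rcases s.eq_empty_or_nonempty with rfl | hs'
    · simpa using integralLE_rightTangent haff φ a
    · obtain ⟨c, hc, t, ht, heq⟩ := hφ.exists_sup'_insert_rightTangent_eq hs'
        (fun q hq => hint q (Finset.mem_insert_of_mem hq)) (hint a (Finset.mem_insert_self a s))
        hlt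
      simp_rw [heq]
      exact (ih hs' fun q hq => hpos q (Finset.mem_insert_of_mem hq)).add
        ((hhinge t ((hpos _ (Finset.mem_insert_of_mem (s.max'_mem hs'))).le.trans ht)).const_mul hc)

lemma integralLE_max_one_sub_mul {c : ℝ} (hc : 0 ≤ c) :
    IntegralLE μ ν (fun x => max (1 - c * x) 0) := by
  have h : ∀ x, max (1 - c * x) 0 = (-c * x + 1) + c * max (x - c⁻¹) 0 := by
    intro x
    rcases hc.eq_or_lt with rfl | hcpos
    · simp
    · rw [mul_max_of_nonneg _ _ hc, mul_sub, mul_inv_cancel₀ hcpos.ne', mul_zero]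
      rcases le_total (c * x) 1 with h | h
      · rw [max_eq_left (by linarith), max_eq_right (by linarith)]; ring
      · rw [max_eq_right (by linarith), max_eq_left (by linarith)]; ring
  simp_rw [h]
  exact (haff (-c) 1).add ((hhinge c⁻¹ (inv_nonneg.2 hc)).const_mul hc)

theorem integral_le_integral_of_convexOn [IsFiniteMeasure μ] [IsFiniteMeasure ν]
    (hμ : ∀ᵐ x ∂μ, x ∈ Ici 0) (hν : ∀ᵐ x ∂ν, x ∈ Ici 0) {φ : ℝ → ℝ}
    (hφ : ConvexOn ℝ (Ici 0) φ) (hφμ : Integrable φ μ) (hφν : Integrable φ ν) :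
    ∫ x, φ x ∂μ ≤ ∫ x, φ x ∂ν := by
  set l := ⨆ n, tangentApprox φ n 0
  have hl : Tendsto (tangentApprox φ · 0) atTop (𝓝 l) :=
    tendsto_atTop_ciSup monotone_tangentApprox
      ⟨φ 0, forall_mem_range.2 fun n => hφ.tangentApprox_le le_rfl⟩
  have hjump : 0 ≤ φ 0 - l :=
    sub_nonneg.2 (le_of_tendsto' hl fun n => hφ.tangentApprox_le le_rfl)
  -- tangents only reach `l ≤ φ 0` at the endpoint; a vanishing hinge bump supplies the jump
  refine IntegralLE.integral_le_of_tendsto hμ hν (F := fun n x =>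
      tangentApprox φ n x + (φ 0 - l) * max (1 - (n + 1 : ℝ) * x) 0)
    (fun n => (integralLE_sup'_rightTangent haff hhinge hφ _ _ fun q hq => ?_).add
      ((integralLE_max_one_sub_mul haff hhinge (by positivity)).const_mul hjump))
    (fun x => |φ x| + |rightTangent φ (posDenseSeq 0) x| + (φ 0 - l))
    ((hφμ.abs.add (integralLE_rightTangent haff φ _).1.abs).add (integrable_const _))
    ((hφν.abs.add (integralLE_rightTangent haff φ _).2.1.abs).add (integrable_const _))
    (fun n x (hx : 0 ≤ x) => ?_) (fun x (hx : 0 ≤ x) => ?_)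
  · obtain ⟨i, -, rfl⟩ := Finset.mem_image.1 hq
    exact posDenseSeq_pos i
  · have hψ : |tangentApprox φ n x| ≤ |rightTangent φ (posDenseSeq 0) x| + |φ x| :=
      (abs_le_max_abs_abs (rightTangent_le_tangentApprox (Nat.zero_le n))
        (hφ.tangentApprox_le hx)).trans (max_le_add_of_nonneg (abs_nonneg _) (abs_nonneg _))
    have hbump : |(φ 0 - l) * max (1 - (n + 1 : ℝ) * x) 0| ≤ φ 0 - l := by
      rw [abs_mul, abs_of_nonneg hjump, abs_of_nonneg (le_max_right _ _)]
      exact mul_le_of_le_one_right hjump (max_le (by nlinarith) zero_le_one)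
    exact (abs_add_le _ _).trans (by linarith)
  · rcases hx.eq_or_lt with rfl | hx
    · simpa using hl.add_const (φ 0 - l)
    · simpa using (hφ.tendsto_tangentApprox hx).add
        ((tendsto_max_one_sub_mul_atTop hx).const_mul (φ 0 - l))

end ConvexOrder

/-- A finite signed measure on `[0,∞)` is modeled as the difference `σ = σp - σm`
of two finite measures supported on `[0,∞)`, with finite first moments, such that
`∫ L dσ = 0` for every affine `L`. Equivalence of: (1) `∫ φ dσ ≥ 0` for all convex `φ`;
(2) `∫_t^∞ σ((λ,∞)) dλ ≥ 0` for `t ≥ 0`; (3) `∫ [x-t]⁺ dσ ≥ 0` for `t ≥ 0`. -/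
theorem stmt0 (σp σm : Measure ℝ) [IsFiniteMeasure σp] [IsFiniteMeasure σm]
    (hp : σp (Set.Iio 0) = 0) (hm : σm (Set.Iio 0) = 0)
    (hintp : Integrable (fun x : ℝ => x) σp)
    (hintm : Integrable (fun x : ℝ => x) σm)
    (haff : ∀ a b : ℝ, ∫ x, (a * x + b) ∂σp = ∫ x, (a * x + b) ∂σm) :
    ((∀ φ : ℝ → ℝ, ConvexOn ℝ (Set.Ici 0) φ → Integrable φ σp → Integrable φ σm →
        ∫ x, φ x ∂σm ≤ ∫ x, φ x ∂σp) ↔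
      (∀ t : ℝ, 0 ≤ t →
        0 ≤ ∫ l in Set.Ioi t,
          ((σp (Set.Ioi l)).toReal - (σm (Set.Ioi l)).toReal))) ∧
    ((∀ t : ℝ, 0 ≤ t →
        0 ≤ ∫ l in Set.Ioi t,
          ((σp (Set.Ioi l)).toReal - (σm (Set.Ioi l)).toReal)) ↔
      (∀ t : ℝ, 0 ≤ t →
        ∫ x, max (x - t) 0 ∂σm ≤ ∫ x, max (x - t) 0 ∂σp)) := by
  have hBC : (∀ t : ℝ, 0 ≤ t →
        0 ≤ ∫ l in Ioi t, ((σp (Ioi l)).toReal - (σm (Ioi l)).toReal)) ↔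
      ∀ t : ℝ, 0 ≤ t → ∫ x, max (x - t) 0 ∂σm ≤ ∫ x, max (x - t) 0 ∂σp :=
    forall₂_congr fun t _ => by
      simp only [← measureReal_def]
      rw [integral_sub (integrableOn_measureReal_Ioi hintp t)
        (integrableOn_measureReal_Ioi hintm t), ← integral_max_sub_eq_integral_measureReal_Ioi,
        ← integral_max_sub_eq_integral_measureReal_Ioi, sub_nonneg]
  have hsupp {ρ : Measure ℝ} (hρ : ρ (Iio 0) = 0) : ∀ᵐ x ∂ρ, x ∈ Ici 0 :=
    (mem_ae_iff (s := Ici 0)).2 (by rwa [compl_Ici])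
  refine ⟨Iff.trans ⟨fun h t _ => ?_, fun h φ hφ hφp hφm => ?_⟩ hBC.symm, hBC⟩
  · exact h _ ((convexOn_max_sub_const t).subset (subset_univ _) (convex_Ici 0))
      (integrable_max_sub_const hintp t) (integrable_max_sub_const hintm t)
  · refine integral_le_integral_of_convexOn (fun a b => ?_) (fun t ht => ?_)
      (hsupp hm) (hsupp hp) hφ hφm hφp
    · exact ⟨(hintm.const_mul a).add (integrable_const b),
        (hintp.const_mul a).add (integrable_const b), (haff a b).ge⟩
    · exact ⟨integrable_max_sub_const hintm t, integrable_max_sub_const hintp t, h t ht⟩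
end

section
/- Let g,f be nonnegative measurable functions on (X,A,μ) with distribution functions G,F finite on (0,∞). Suppose ∫(f^{s₀}−g^{s₀}) dμ = 0 for some s₀>0, and there is λ₀>0 with F(λ)≤G(λ) on (0,λ₀) and F(λ)≥G(λ) on (λ₀,∞). Then ∫(f^s − g^s) dμ ≥ 0 for all s ≥ s₀ with f^s−g^s integrable. -/
/-!
Layer cake: `∫ (f ^ s - g ^ s) dμ = ∫₀^∞ s λ ^ (s - 1) (F λ - G λ) dλ`. For `u ≤ v` one writes
`v ^ s - u ^ s = ∫ 1[u ≤ λ < v] s λ ^ (s - 1) dλ` and applies Tonelli on `{v > 0}`, which is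
σ-finite because the distribution function of `v` is finite on `(0, ∞)`; the general case follows
by splitting `f ^ s - g ^ s` into positive and negative parts, `max f g ^ s - g ^ s` and
`max f g ^ s - f ^ s`.

Then `s λ ^ (s - 1) = (s / s₀) λ ^ (s - s₀) · s₀ λ ^ (s₀ - 1)`, and `λ ^ (s - s₀) - λ₀ ^ (s - s₀)`
has the sign of `F - G`, so
`∫ s λ ^ (s - 1) (F - G) ≥ (s / s₀) λ₀ ^ (s - s₀) ∫ s₀ λ ^ (s₀ - 1) (F - G) = 0`.
-/

open MeasureTheory Set
open scoped ENNReal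

lemma ofReal_rpow_sub_rpow_eq_lintegral_indicator {a b s : ℝ} (ha : 0 ≤ a) (hb : 0 ≤ b)
    (hs : 0 < s) :
    ENNReal.ofReal (b ^ s - a ^ s) =
      ∫⁻ l in Ioi 0, (Ico a b).indicator (fun l => ENNReal.ofReal (s * l ^ (s - 1))) l := by
  rcases le_total b a with hba | hab
  · rw [Ico_eq_empty_of_le hba, indicator_empty, lintegral_zero,
      ENNReal.ofReal_eq_zero, sub_nonpos]
    exact Real.rpow_le_rpow hb hba hs.le
  have hint : IntervalIntegrable (fun l => s * l ^ (s - 1)) volume a b :=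
    (intervalIntegral.intervalIntegrable_rpow' (by linarith)).const_mul s
  have hnonneg : 0 ≤ᵐ[volume.restrict (Ioc a b)] fun l => s * l ^ (s - 1) :=
    ae_restrict_of_forall_mem measurableSet_Ioc fun l hl =>
      mul_nonneg hs.le (Real.rpow_nonneg (ha.trans hl.1.le) _)
  calc ENNReal.ofReal (b ^ s - a ^ s)
      = ENNReal.ofReal (∫ l in a..b, s * l ^ (s - 1)) := by
        rw [intervalIntegral.integral_const_mul, integral_rpow (Or.inl (by linarith)),
          sub_add_cancel]
        field_simp
    _ = ∫⁻ l in Ioc a b, ENNReal.ofReal (s * l ^ (s - 1)) := by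
        rw [intervalIntegral.integral_of_le hab,
          ofReal_integral_eq_lintegral_ofReal hint.1 hnonneg]
    _ = ∫⁻ l in Ico a b ∩ Ici 0, ENNReal.ofReal (s * l ^ (s - 1)) := by
        rw [inter_eq_left.2 (Ico_subset_Ici_self.trans (Ici_subset_Ici.2 ha)),
          Measure.restrict_congr_set Ico_ae_eq_Ioc]
    _ = _ := by
        rw [Measure.restrict_congr_set Ioi_ae_eq_Ici, lintegral_indicator measurableSet_Ico,
          Measure.restrict_restrict measurableSet_Ico]

section LayerCake

variable {X : Type*} [MeasurableSpace X] (μ : Measure X) {u v : X → ℝ} {s : ℝ}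

lemma lintegral_ofReal_rpow_sub_rpow_of_sFinite [SFinite μ] (hu : Measurable u)
    (hv : Measurable v) (hu0 : ∀ x, 0 ≤ u x) (hv0 : ∀ x, 0 ≤ v x) (hs : 0 < s) :
    ∫⁻ x, ENNReal.ofReal (v x ^ s - u x ^ s) ∂μ =
      ∫⁻ l in Ioi 0, μ {x | u x ≤ l ∧ l < v x} * ENNReal.ofReal (s * l ^ (s - 1)) := by
  set w : ℝ → ℝ≥0∞ := fun l => ENNReal.ofReal (s * l ^ (s - 1))
  have hw : Measurable w := by fun_prop
  calc ∫⁻ x, ENNReal.ofReal (v x ^ s - u x ^ s) ∂μ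
      = ∫⁻ x, (∫⁻ l in Ioi (0 : ℝ), (Ico (u x) (v x)).indicator w l) ∂μ :=
        lintegral_congr fun x => ofReal_rpow_sub_rpow_eq_lintegral_indicator (hu0 x) (hv0 x) hs
    _ = ∫⁻ l in Ioi 0, ∫⁻ x, {x | u x ≤ l ∧ l < v x}.indicator (fun _ => w l) x ∂μ := by
        refine lintegral_lintegral_swap (Measurable.aemeasurable ?_)
        exact (hw.comp measurable_snd).indicator
          ((measurableSet_le (hu.comp measurable_fst) measurable_snd).inter
            (measurableSet_lt measurable_snd (hv.comp measurable_fst)))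
    _ = _ := lintegral_congr fun l => by
        rw [lintegral_indicator_const (s := {x | u x ≤ l ∧ l < v x})
          ((measurableSet_le hu measurable_const).inter (measurableSet_lt measurable_const hv)),
          mul_comm]

lemma sigmaFinite_restrict_setOf_pos (hv : Measurable v)
    (hfin : ∀ l : ℝ, 0 < l → μ {x | l < v x} ≠ ∞) :
    SigmaFinite (μ.restrict {x | 0 < v x}) := by
  have hpos : MeasurableSet {x | 0 < v x} := measurableSet_lt measurable_const hv
  refine Measure.sigmaFinite_of_countable
    (S := insert {x | 0 < v x}ᶜ (range fun n : ℕ => {x | 1 / (n + 1 : ℝ) < v x}))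
    ((countable_range _).insert _) ?_ ?_
  · rintro _ (rfl | ⟨n, rfl⟩)
    · simp [Measure.restrict_apply hpos.compl]
    · exact (Measure.restrict_le_self _).trans_lt (hfin _ Nat.one_div_pos_of_nat).lt_top
  · refine eq_univ_of_forall fun x => ?_
    by_cases hx : 0 < v x
    · obtain ⟨n, hn⟩ := exists_nat_one_div_lt hx
      exact mem_sUnion_of_mem hn (mem_insert_of_mem _ ⟨n, rfl⟩)
    · exact mem_sUnion_of_mem hx (mem_insert _ _)

lemma lintegral_ofReal_rpow_sub_rpow (hu : Measurable u) (hv : Measurable v)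
    (hu0 : ∀ x, 0 ≤ u x) (hv0 : ∀ x, 0 ≤ v x) (hvfin : ∀ l : ℝ, 0 < l → μ {x | l < v x} ≠ ∞)
    (hs : 0 < s) :
    ∫⁻ x, ENNReal.ofReal (v x ^ s - u x ^ s) ∂μ =
      ∫⁻ l in Ioi 0, μ {x | u x ≤ l ∧ l < v x} * ENNReal.ofReal (s * l ^ (s - 1)) := by
  have := sigmaFinite_restrict_setOf_pos μ hv hvfin
  have hsupp : Function.support (fun x => ENNReal.ofReal (v x ^ s - u x ^ s)) ⊆
      {x | 0 < v x} := by
    intro x hx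
    by_contra hvx
    have hvx : v x = 0 := le_antisymm (not_lt.1 hvx) (hv0 x)
    refine hx (ENNReal.ofReal_eq_zero.2 ?_)
    rw [hvx, Real.zero_rpow hs.ne', zero_sub, neg_nonpos]
    exact Real.rpow_nonneg (hu0 x) s
  rw [← setLIntegral_eq_of_support_subset hsupp,
    lintegral_ofReal_rpow_sub_rpow_of_sFinite _ hu hv hu0 hv0 hs]
  refine setLIntegral_congr_fun measurableSet_Ioi fun l hl => ?_
  rw [Measure.restrict_eq_self μ
    (show {x | u x ≤ l ∧ l < v x} ⊆ {x | 0 < v x} from fun x hx => lt_trans hl hx.2)]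

lemma integral_rpow_sub_rpow_of_le (hu : Measurable u) (hv : Measurable v)
    (hu0 : ∀ x, 0 ≤ u x) (huv : ∀ x, u x ≤ v x)
    (hvfin : ∀ l : ℝ, 0 < l → μ {x | l < v x} ≠ ∞) (hs : 0 < s)
    (hint : Integrable (fun x => v x ^ s - u x ^ s) μ) :
    IntegrableOn (fun l => s * l ^ (s - 1) * (μ.real {x | l < v x} - μ.real {x | l < u x}))
        (Ioi 0) ∧
      ∫ x, (v x ^ s - u x ^ s) ∂μ =
        ∫ l in Ioi 0, s * l ^ (s - 1) * (μ.real {x | l < v x} - μ.real {x | l < u x}) := by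
  set D : ℝ → ℝ := fun l => s * l ^ (s - 1) * (μ.real {x | l < v x} - μ.real {x | l < u x})
  have hlevel : ∀ l, 0 < l →
      μ.real {x | l < v x} - μ.real {x | l < u x} = μ.real {x | u x ≤ l ∧ l < v x} := by
    intro l hl
    rw [← measureReal_sdiff (s₁ := {x | l < v x}) (s₂ := {x | l < u x})
      (fun x hx => lt_of_lt_of_le hx (huv x)) (measurableSet_lt measurable_const hu) (hvfin l hl)]
    congr 1
    ext x
    simp [and_comm]
  have hD : ∀ l ∈ Ioi (0 : ℝ),
      ENNReal.ofReal (D l) = μ {x | u x ≤ l ∧ l < v x} * ENNReal.ofReal (s * l ^ (s - 1)) := by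
    intro l hl
    have hfin : μ {x | u x ≤ l ∧ l < v x} ≠ ∞ :=
      ne_top_of_le_ne_top (hvfin l hl) (measure_mono fun x hx => hx.2)
    simp only [D]
    rw [hlevel l hl, mul_comm, ENNReal.ofReal_mul measureReal_nonneg,
      ofReal_measureReal hfin]
  have hD0 : 0 ≤ᵐ[volume.restrict (Ioi 0)] D := by
    refine ae_restrict_of_forall_mem measurableSet_Ioi fun l hl => ?_
    exact mul_nonneg (mul_nonneg hs.le (Real.rpow_nonneg (le_of_lt hl) _))
      ((hlevel l hl).symm ▸ measureReal_nonneg)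
  have hmeas : ∀ w : X → ℝ, Measurable fun l : ℝ => μ.real {x | l < w x} := fun w =>
    Measurable.ennreal_toReal (f := fun l : ℝ => μ {x | l < w x})
      (Antitone.measurable fun a b hab => measure_mono fun x hx => lt_of_le_of_lt hab hx)
  have hDm : AEStronglyMeasurable D (volume.restrict (Ioi 0)) :=
    (by fun_prop : Measurable fun l : ℝ => s * l ^ (s - 1)).mul ((hmeas v).sub (hmeas u))
      |>.aestronglyMeasurable
  have hlint : ∫⁻ l in Ioi 0, ENNReal.ofReal (D l) =
      ∫⁻ x, ENNReal.ofReal (v x ^ s - u x ^ s) ∂μ := by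
    rw [setLIntegral_congr_fun measurableSet_Ioi hD,
      lintegral_ofReal_rpow_sub_rpow μ hu hv hu0 (fun x => (hu0 x).trans (huv x)) hvfin hs]
  have hnonneg : 0 ≤ᵐ[μ] fun x => v x ^ s - u x ^ s :=
    ae_of_all _ fun x => sub_nonneg.2 (Real.rpow_le_rpow (hu0 x) (huv x) hs.le)
  refine ⟨⟨hDm, (hasFiniteIntegral_iff_ofReal hD0).2 (hlint ▸ hint.lintegral_lt_top)⟩, ?_⟩
  rw [integral_eq_lintegral_of_nonneg_ae hD0 hDm, hlint,
    integral_eq_lintegral_of_nonneg_ae hnonneg hint.aestronglyMeasurable]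

lemma integral_rpow_sub_rpow {f g : X → ℝ} (hf : Measurable f) (hg : Measurable g)
    (hf0 : ∀ x, 0 ≤ f x) (hg0 : ∀ x, 0 ≤ g x)
    (hffin : ∀ l : ℝ, 0 < l → μ {x | l < f x} ≠ ∞)
    (hgfin : ∀ l : ℝ, 0 < l → μ {x | l < g x} ≠ ∞) (hs : 0 < s)
    (hint : Integrable (fun x => f x ^ s - g x ^ s) μ) :
    IntegrableOn (fun l => s * l ^ (s - 1) * (μ.real {x | l < f x} - μ.real {x | l < g x}))
        (Ioi 0) ∧
      ∫ x, (f x ^ s - g x ^ s) ∂μ =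
        ∫ l in Ioi 0, s * l ^ (s - 1) * (μ.real {x | l < f x} - μ.real {x | l < g x}) := by
  set M : X → ℝ := fun x => max (f x) (g x)
  have hMfin : ∀ l : ℝ, 0 < l → μ {x | l < M x} ≠ ∞ := fun l hl => by
    simp only [M, lt_max_iff, ofPred_or]
    exact measure_union_ne_top (hffin l hl) (hgfin l hl)
  have hpow : ∀ x, M x ^ s = max (f x ^ s) (g x ^ s) := fun x =>
    (Real.monotoneOn_rpow_Ici_of_exponent_nonneg hs.le).map_max (hf0 x) (hg0 x)
  have hposPart : Integrable (fun x => M x ^ s - g x ^ s) μ := by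
    refine hint.pos_part.congr (ae_of_all _ fun x => ?_)
    show max (f x ^ s - g x ^ s) 0 = M x ^ s - g x ^ s
    rw [hpow, ← max_sub_sub_right, sub_self]
  have hnegPart : Integrable (fun x => M x ^ s - f x ^ s) μ := by
    refine hint.neg_part.congr (ae_of_all _ fun x => ?_)
    show max (-(f x ^ s - g x ^ s)) 0 = M x ^ s - f x ^ s
    rw [hpow, ← max_sub_sub_right, sub_self, neg_sub, max_comm]
  obtain ⟨hI₁, hE₁⟩ := integral_rpow_sub_rpow_of_le μ hg (hf.max hg) hg0
    (fun x => le_max_right _ _) hMfin hs hposPart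
  obtain ⟨hI₂, hE₂⟩ := integral_rpow_sub_rpow_of_le μ hf (hf.max hg) hf0
    (fun x => le_max_left _ _) hMfin hs hnegPart
  refine ⟨(hI₁.sub hI₂).congr_fun (fun l _ => by simp only [Pi.sub_apply]; ring)
    measurableSet_Ioi, ?_⟩
  rw [integral_congr_ae (ae_of_all _ fun x => (sub_sub_sub_cancel_left _ _ (M x ^ s)).symm),
    integral_sub hposPart hnegPart, hE₁, hE₂, ← integral_sub hI₁ hI₂]
  exact setIntegral_congr_fun measurableSet_Ioi fun l _ => by ring

end LayerCake

lemma setIntegral_mul_nonneg_of_sign_change {ν : Measure ℝ} {S : Set ℝ} {ρ K : ℝ → ℝ} {l₀ : ℝ}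
    (hS : MeasurableSet S) (hl₀ : l₀ ∈ S) (hρ : MonotoneOn ρ S)
    (hK_lt : ∀ l ∈ S, l < l₀ → K l ≤ 0) (hK_gt : ∀ l ∈ S, l₀ < l → 0 ≤ K l)
    (hK : IntegrableOn K S ν) (hρK : IntegrableOn (fun l => ρ l * K l) S ν)
    (hK0 : ∫ l in S, K l ∂ν = 0) :
    0 ≤ ∫ l in S, ρ l * K l ∂ν := by
  have hpointwise : ∀ l ∈ S, ρ l₀ * K l ≤ ρ l * K l := by
    intro l hl
    rcases lt_trichotomy l l₀ with hlt | rfl | hgt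
    · exact mul_le_mul_of_nonpos_right (hρ hl hl₀ hlt.le) (hK_lt l hl hlt)
    · rfl
    · exact mul_le_mul_of_nonneg_right (hρ hl₀ hl hgt.le) (hK_gt l hl hgt)
  calc 0 = ∫ l in S, ρ l₀ * K l ∂ν := by rw [integral_const_mul, hK0, mul_zero]
    _ ≤ ∫ l in S, ρ l * K l ∂ν := setIntegral_mono_on (hK.const_mul _) hρK hS hpointwise

/-- Nazarov–Podkorytov / Karlin–Novikoff: if `∫ (f^{s₀} - g^{s₀}) dμ = 0` and the distribution
functions of `f` and `g` have a single crossing at `λ₀` (from `-` to `+`), then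
`∫ (f^s - g^s) dμ ≥ 0` for all `s ≥ s₀` with `f^s - g^s` integrable. -/
theorem stmt2 {X : Type*} [MeasurableSpace X] (μ : Measure X) (f g : X → ℝ)
    (hf : Measurable f) (hg : Measurable g)
    (hf0 : ∀ x, 0 ≤ f x) (hg0 : ∀ x, 0 ≤ g x)
    (hFfin : ∀ l : ℝ, 0 < l → μ {x | l < f x} < ⊤)
    (hGfin : ∀ l : ℝ, 0 < l → μ {x | l < g x} < ⊤)
    (s₀ : ℝ) (hs₀ : 0 < s₀)
    (hint₀ : Integrable (fun x => f x ^ s₀ - g x ^ s₀) μ)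
    (hmean : ∫ x, (f x ^ s₀ - g x ^ s₀) ∂μ = 0)
    (l₀ : ℝ) (hl₀ : 0 < l₀)
    (hcross₁ : ∀ l ∈ Set.Ioo 0 l₀, μ {x | l < f x} ≤ μ {x | l < g x})
    (hcross₂ : ∀ l : ℝ, l₀ < l → μ {x | l < g x} ≤ μ {x | l < f x}) :
    ∀ s : ℝ, s₀ ≤ s → Integrable (fun x => f x ^ s - g x ^ s) μ →
      0 ≤ ∫ x, (f x ^ s - g x ^ s) ∂μ := by
  intro s hss hint
  have hs : 0 < s := hs₀.trans_le hss
  set H : ℝ → ℝ := fun l => μ.real {x | l < f x} - μ.real {x | l < g x}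
  have hFfin' := fun l hl => (hFfin l hl).ne
  have hGfin' := fun l hl => (hGfin l hl).ne
  obtain ⟨hI₀, hE₀⟩ := integral_rpow_sub_rpow μ hf hg hf0 hg0 hFfin' hGfin' hs₀ hint₀
  obtain ⟨hI, hE⟩ := integral_rpow_sub_rpow μ hf hg hf0 hg0 hFfin' hGfin' hs hint
  have hweight : EqOn (fun l => s / s₀ * l ^ (s - s₀) * (s₀ * l ^ (s₀ - 1) * H l))
      (fun l => s * l ^ (s - 1) * H l) (Ioi 0) := fun l hl => by
    have hsplit : l ^ (s - 1) = l ^ (s - s₀) * l ^ (s₀ - 1) := by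
      rw [← Real.rpow_add hl, sub_add_sub_cancel]
    simp only [hsplit]
    field_simp
  have hρ : MonotoneOn (fun l : ℝ => s / s₀ * l ^ (s - s₀)) (Ioi 0) := fun a ha b _ hab =>
    mul_le_mul_of_nonneg_left (Real.rpow_le_rpow (le_of_lt ha) hab (sub_nonneg.2 hss))
      (div_pos hs hs₀).le
  have hweight₀ : ∀ l ∈ Ioi (0 : ℝ), 0 ≤ s₀ * l ^ (s₀ - 1) := fun l hl =>
    mul_nonneg hs₀.le (Real.rpow_nonneg (le_of_lt hl) _)
  rw [hE, ← setIntegral_congr_fun measurableSet_Ioi hweight]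
  refine setIntegral_mul_nonneg_of_sign_change measurableSet_Ioi hl₀ hρ ?_ ?_ hI₀
    (hI.congr_fun hweight.symm measurableSet_Ioi) (hE₀ ▸ hmean)
  · intro l hl hlt
    refine mul_nonpos_of_nonneg_of_nonpos (hweight₀ l hl) (sub_nonpos.2 ?_)
    exact ENNReal.toReal_mono (hGfin' l hl) (hcross₁ l ⟨hl, hlt⟩)
  · intro l hl hgt
    refine mul_nonneg (hweight₀ l hl) (sub_nonneg.2 ?_)
    exact ENNReal.toReal_mono (hFfin' l hl) (hcross₂ l hgt)
end

section
/- For all x ∈ (0,1), (sin(πx)/(πx))² ≤ e^{−π²x²/3} ≤ e^{−πx²}. -/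
open Real Filter

lemma sin_le_aux (x : ℝ) (hx : x ∈ Set.Ioo (0 : ℝ) 1) :
    Real.sin (Real.pi * x) ≤ Real.pi * x * Real.exp (-Real.pi ^ 2 * x ^ 2 / 6) := by
  obtain ⟨hx0, hx1⟩ := hx
  have hpx : 0 < Real.pi * x := mul_pos Real.pi_pos hx0
  have hbound : ∀ n : ℕ,
      Real.pi * x * ∏ j ∈ Finset.range n, ((1 : ℝ) - x ^ 2 / ((j : ℝ) + 1) ^ 2)
        ≤ Real.pi * x * Real.exp (-x ^ 2 * ∑ j ∈ Finset.range n, 1 / ((j : ℝ) + 1) ^ 2) := by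
    intro n
    apply mul_le_mul_of_nonneg_left _ hpx.le
    calc ∏ j ∈ Finset.range n, ((1 : ℝ) - x ^ 2 / ((j : ℝ) + 1) ^ 2)
        ≤ ∏ j ∈ Finset.range n, Real.exp (-(x ^ 2 / ((j : ℝ) + 1) ^ 2)) := by
          apply Finset.prod_le_prod
          · intro j _
            have hj1 : (1 : ℝ) ≤ ((j : ℝ) + 1) ^ 2 := by
              have hj0 : (0:ℝ) ≤ (j:ℝ) := Nat.cast_nonneg j
              have : (1 : ℝ) ≤ (j : ℝ) + 1 := by linarith
              nlinarith
            have hx2 : x ^ 2 < 1 := by nlinarith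
            have : x ^ 2 / ((j : ℝ) + 1) ^ 2 ≤ x ^ 2 := by
              apply div_le_of_le_mul₀ (by positivity) (by positivity)
              nlinarith
            linarith
          · intro j _
            linarith [Real.add_one_le_exp (-(x ^ 2 / ((j : ℝ) + 1) ^ 2))]
      _ = Real.exp (-x ^ 2 * ∑ j ∈ Finset.range n, 1 / ((j : ℝ) + 1) ^ 2) := by
          rw [← Real.exp_sum, Finset.mul_sum]
          congr 1
          apply Finset.sum_congr rfl
          intro j _
          field_simp
  have hsum : HasSum (fun n : ℕ => (1 : ℝ) / ((n : ℝ) + 1) ^ 2) (Real.pi ^ 2 / 6) := by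
    have := hasSum_zeta_two
    rw [← hasSum_nat_add_iff' 1] at this
    simpa using this
  have htend : Filter.Tendsto
      (fun n : ℕ => Real.pi * x * Real.exp (-x ^ 2 * ∑ j ∈ Finset.range n, 1 / ((j : ℝ) + 1) ^ 2))
      atTop (nhds (Real.pi * x * Real.exp (-x ^ 2 * (Real.pi ^ 2 / 6)))) := by
    apply Filter.Tendsto.const_mul
    exact (Real.continuous_exp.tendsto _).comp
      ((hsum.tendsto_sum_nat).const_mul (-x ^ 2))
  have key := le_of_tendsto_of_tendsto' (Real.tendsto_euler_sin_prod x) htend hbound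
  calc Real.sin (Real.pi * x) ≤ Real.pi * x * Real.exp (-x ^ 2 * (Real.pi ^ 2 / 6)) := key
    _ = Real.pi * x * Real.exp (-Real.pi ^ 2 * x ^ 2 / 6) := by ring_nf

/-- For all `x ∈ (0,1)`, `(sin(πx)/(πx))² ≤ e^{-π²x²/3} ≤ e^{-πx²}`. -/
theorem stmt10 (x : ℝ) (hx : x ∈ Set.Ioo (0 : ℝ) 1) :
    (Real.sin (Real.pi * x) / (Real.pi * x)) ^ 2 ≤
      Real.exp (-Real.pi ^ 2 * x ^ 2 / 3) ∧
    Real.exp (-Real.pi ^ 2 * x ^ 2 / 3) ≤ Real.exp (-Real.pi * x ^ 2) := by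
  obtain ⟨hx0, hx1⟩ := hx
  have hpx : 0 < Real.pi * x := mul_pos Real.pi_pos hx0
  constructor
  · have h1 := sin_le_aux x ⟨hx0, hx1⟩
    have hs0 : 0 ≤ Real.sin (Real.pi * x) := by
      apply Real.sin_nonneg_of_nonneg_of_le_pi hpx.le
      nlinarith [Real.pi_pos]
    have hdiv : Real.sin (Real.pi * x) / (Real.pi * x) ≤ Real.exp (-Real.pi ^ 2 * x ^ 2 / 6) :=
      (div_le_iff₀ hpx).mpr (by linarith [h1, mul_comm (Real.pi * x) (Real.exp (-Real.pi ^ 2 * x ^ 2 / 6))])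
    have hdiv0 : 0 ≤ Real.sin (Real.pi * x) / (Real.pi * x) := div_nonneg hs0 hpx.le
    calc (Real.sin (Real.pi * x) / (Real.pi * x)) ^ 2
        ≤ Real.exp (-Real.pi ^ 2 * x ^ 2 / 6) ^ 2 := by nlinarith [Real.exp_pos (-Real.pi ^ 2 * x ^ 2 / 6)]
      _ = Real.exp (-Real.pi ^ 2 * x ^ 2 / 3) := by
          rw [← Real.exp_nat_mul]; ring_nf
  · apply Real.exp_le_exp.mpr
    nlinarith [mul_nonneg (mul_nonneg (by linarith [Real.pi_gt_three] : (0:ℝ) ≤ Real.pi - 3) Real.pi_pos.le) (sq_nonneg x)]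
end

section
/- For every integer k ≥ 2, ∫_k^{k+1} (sin(πu)/(πu))² du ≥ (1/(3π²)) ∫_k^{k+1} u^{−2} du = 1/(3π² k(k+1)); consequently for x > 1, ∫_x^∞ (sin(πu)/(πu))² du ≥ 1/(3π² ⌈x⌉). -/
/-!
On `[a, a + 1]` with `a > 0` we have `sinc (π u)² ≥ sin² (π u) / (π (a + 1))²`, and `sin² (π u)`
has period one with mean `1 / 2`, so `∫_a^{a+1} sinc (π u)² ≥ 1 / (2 π² (a + 1)²)`. For `a ≥ 2` this
dominates `1 / (3 π² a (a + 1)) = (1 / (3 π²)) ∫_a^{a+1} u⁻²`. Summing these unit-interval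
comparisons over `[m, ∞)`, `m = ⌈x⌉ ≥ 2`, gives
`∫_x^∞ sinc (π u)² ≥ ∫_m^∞ sinc (π u)² ≥ (1 / (3 π²)) ∫_m^∞ u⁻² = 1 / (3 π² m)`.
-/

open MeasureTheory Set Filter Topology Real

theorem integral_Ioi_le_of_forall_intervalIntegral_le {μ : Measure ℝ} {f g : ℝ → ℝ} {a : ℝ}
    (hf : IntegrableOn f (Ioi a) μ) (hg : IntegrableOn g (Ioi a) μ)
    (hfg : ∀ n : ℕ, ∫ u in a + n..a + n + 1, f u ∂μ ≤ ∫ u in a + n..a + n + 1, g u ∂μ) :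
    ∫ u in Ioi a, f u ∂μ ≤ ∫ u in Ioi a, g u ∂μ := by
  have hsum : ∀ h : ℝ → ℝ, IntegrableOn h (Ioi a) μ → ∀ N : ℕ,
      ∑ n ∈ Finset.range N, ∫ u in a + n..a + n + 1, h u ∂μ = ∫ u in a..a + N, h u ∂μ := by
    intro h hh N
    have hint : ∀ n < N, IntervalIntegrable h μ (a + n) (a + ↑(n + 1)) := fun n _ => by
      rw [intervalIntegrable_iff_integrableOn_Ioc_of_le (by push_cast; linarith)]
      exact hh.mono_set (Ioc_subset_Ioi_self.trans (Ioi_subset_Ioi (by simp)))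
    simpa [add_assoc] using intervalIntegral.sum_integral_adjacent_intervals hint
  have hN : Tendsto (fun N : ℕ => a + N) atTop atTop :=
    tendsto_atTop_add_const_left _ _ tendsto_natCast_atTop_atTop
  refine le_of_tendsto_of_tendsto' (intervalIntegral_tendsto_integral_Ioi a hf hN)
    (intervalIntegral_tendsto_integral_Ioi a hg hN) fun N => ?_
  rw [← hsum f hf, ← hsum g hg]
  exact Finset.sum_le_sum fun n _ => hfg n

theorem hasDerivAt_neg_inv {u : ℝ} (hu : u ≠ 0) : HasDerivAt (fun v : ℝ => -v⁻¹) (u⁻¹ ^ 2) u := by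
  have h := (hasDerivAt_inv hu).neg
  rwa [neg_neg, ← inv_pow] at h

theorem integral_inv_sq {a b : ℝ} (ha : 0 < a) (hb : 0 < b) :
    ∫ u in a..b, u⁻¹ ^ 2 = a⁻¹ - b⁻¹ := by
  have hne : ∀ u ∈ uIcc a b, u ≠ 0 := fun u hu => ((lt_min ha hb).trans_le hu.1).ne'
  rw [intervalIntegral.integral_eq_sub_of_hasDerivAt (fun u hu => hasDerivAt_neg_inv (hne u hu))
    ((continuousOn_inv₀.mono hne).pow 2).intervalIntegrable]
  ring

theorem integrableOn_Ioi_inv_sq {a : ℝ} (ha : 0 < a) :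
    IntegrableOn (fun u : ℝ => u⁻¹ ^ 2) (Ioi a) :=
  integrableOn_Ioi_deriv_of_nonneg' (fun u hu => hasDerivAt_neg_inv (ha.trans_le hu).ne')
    (fun _ _ => sq_nonneg _) (by simpa using tendsto_inv_atTop_zero.neg)

theorem integral_Ioi_inv_sq {a : ℝ} (ha : 0 < a) : ∫ u in Ioi a, u⁻¹ ^ 2 = a⁻¹ := by
  rw [integral_Ioi_of_hasDerivAt_of_nonneg' (fun u hu => hasDerivAt_neg_inv (ha.trans_le hu).ne')
    (fun _ _ => sq_nonneg _) (by simpa using tendsto_inv_atTop_zero.neg)]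
  ring

theorem integral_sin_pi_mul_sq (a : ℝ) : ∫ u in a..a + 1, sin (π * u) ^ 2 = 1 / 2 := by
  rw [intervalIntegral.integral_comp_mul_left (fun v => sin v ^ 2) pi_ne_zero, integral_sin_sq,
    mul_add, mul_one, sin_add_pi, cos_add_pi, smul_eq_mul]
  field_simp
  ring

theorem sinc_sq_le_inv_sq {x : ℝ} (hx : x ≠ 0) : sinc x ^ 2 ≤ x⁻¹ ^ 2 := by
  rw [sinc_of_ne_zero hx, div_pow, inv_pow, ← one_div]
  exact div_le_div_of_nonneg_right (sin_sq_le_one x) (sq_nonneg x)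

theorem sin_sq_div_sq_le_sinc_sq {x y : ℝ} (hx : 0 < x) (hxy : x ≤ y) :
    sin x ^ 2 / y ^ 2 ≤ sinc x ^ 2 := by
  rw [sinc_of_ne_zero hx.ne', div_pow]
  gcongr

theorem integrableOn_Ioi_sinc_pi_mul_sq {a : ℝ} (ha : 0 < a) :
    IntegrableOn (fun u => sinc (π * u) ^ 2) (Ioi a) := by
  refine ((integrableOn_Ioi_inv_sq ha).const_mul (π⁻¹ ^ 2)).mono'
    (by fun_prop : Continuous fun u => sinc (π * u) ^ 2).aestronglyMeasurable ?_
  filter_upwards [ae_restrict_mem measurableSet_Ioi] with u hu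
  rw [norm_pow, norm_eq_abs, sq_abs, ← mul_pow, ← mul_inv]
  exact sinc_sq_le_inv_sq (mul_pos pi_pos (ha.trans hu)).ne'

theorem one_div_le_integral_sinc_pi_mul_sq {a : ℝ} (ha : 0 < a) :
    1 / (2 * (π * (a + 1)) ^ 2) ≤ ∫ u in a..a + 1, sinc (π * u) ^ 2 := by
  calc 1 / (2 * (π * (a + 1)) ^ 2) = ∫ u in a..a + 1, sin (π * u) ^ 2 / (π * (a + 1)) ^ 2 := by
        rw [intervalIntegral.integral_div, integral_sin_pi_mul_sq, div_div]
    _ ≤ ∫ u in a..a + 1, sinc (π * u) ^ 2 := by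
        refine intervalIntegral.integral_mono_on (by linarith)
          ((by fun_prop : Continuous _).intervalIntegrable _ _)
          ((by fun_prop : Continuous _).intervalIntegrable _ _)
          fun u hu => sin_sq_div_sq_le_sinc_sq (mul_pos pi_pos (by linarith [hu.1])) ?_
        gcongr
        exact hu.2

theorem integral_inv_sq_le_integral_sinc_pi_mul_sq {a : ℝ} (ha : 2 ≤ a) :
    1 / (3 * π ^ 2) * ∫ u in a..a + 1, u⁻¹ ^ 2 ≤ ∫ u in a..a + 1, sinc (π * u) ^ 2 := by
  refine le_trans ?_ (one_div_le_integral_sinc_pi_mul_sq (by linarith))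
  rw [integral_inv_sq (by linarith) (by linarith), inv_sub_inv (by linarith) (by linarith),
    one_div_mul_eq_div, div_div, div_le_div_iff₀ (by positivity) (by positivity)]
  nlinarith [pi_pos]

theorem one_div_le_integral_Ioi_sinc_pi_mul_sq {a : ℝ} (ha : 2 ≤ a) :
    1 / (3 * π ^ 2 * a) ≤ ∫ u in Ioi a, sinc (π * u) ^ 2 := by
  have ha0 : 0 < a := by linarith
  calc 1 / (3 * π ^ 2 * a) = ∫ u in Ioi a, 1 / (3 * π ^ 2) * u⁻¹ ^ 2 := by
        rw [integral_const_mul, integral_Ioi_inv_sq ha0]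
        field_simp
    _ ≤ ∫ u in Ioi a, sinc (π * u) ^ 2 :=
        integral_Ioi_le_of_forall_intervalIntegral_le
          ((integrableOn_Ioi_inv_sq ha0).const_mul _) (integrableOn_Ioi_sinc_pi_mul_sq ha0)
          fun n => by
            rw [intervalIntegral.integral_const_mul]
            exact integral_inv_sq_le_integral_sinc_pi_mul_sq (by linarith [n.cast_nonneg (α := ℝ)])

/-- For integers `k ≥ 2`, `∫_k^{k+1} sinc²(u) du ≥ (1/(3π²)) ∫_k^{k+1} u^{-2} du
= 1/(3π²k(k+1))`; consequently for `x > 1`, `∫_x^∞ sinc²(u) du ≥ 1/(3π²⌈x⌉)`. -/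
theorem stmt12 (sinc : ℝ → ℝ)
    (hsinc : ∀ u : ℝ, sinc u =
      if u = 0 then 1 else Real.sin (Real.pi * u) / (Real.pi * u)) :
    (∀ k : ℕ, 2 ≤ k →
      (1 / (3 * Real.pi ^ 2)) * ∫ u in (k : ℝ)..(k + 1 : ℝ), u⁻¹ ^ 2 ≤
        ∫ u in (k : ℝ)..(k + 1 : ℝ), sinc u ^ 2) ∧
    (∀ k : ℕ, 2 ≤ k →
      (1 / (3 * Real.pi ^ 2)) * ∫ u in (k : ℝ)..(k + 1 : ℝ), u⁻¹ ^ 2 =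
        1 / (3 * Real.pi ^ 2 * k * (k + 1))) ∧
    (∀ x : ℝ, 1 < x →
      1 / (3 * Real.pi ^ 2 * (⌈x⌉ : ℝ)) ≤ ∫ u in Set.Ioi x, sinc u ^ 2) := by
  obtain rfl : sinc = fun u => Real.sinc (π * u) := funext fun u => by
    simp [hsinc, Real.sinc_apply, pi_ne_zero]
  refine ⟨fun k hk => integral_inv_sq_le_integral_sinc_pi_mul_sq (by exact_mod_cast hk),
    fun k hk => ?_, fun x hx => ?_⟩
  · have hk0 : (0 : ℝ) < k := by positivity
    rw [integral_inv_sq hk0 (by positivity)]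
    field_simp
    ring
  · have hceil : (2 : ℝ) ≤ ⌈x⌉ := by
      have : (1 : ℤ) < ⌈x⌉ := Int.lt_ceil.2 (by exact_mod_cast hx)
      exact_mod_cast this
    calc 1 / (3 * π ^ 2 * (⌈x⌉ : ℝ)) ≤ ∫ u in Ioi (⌈x⌉ : ℝ), Real.sinc (π * u) ^ 2 :=
          one_div_le_integral_Ioi_sinc_pi_mul_sq hceil
      _ ≤ ∫ u in Ioi x, Real.sinc (π * u) ^ 2 :=
          setIntegral_mono_set (integrableOn_Ioi_sinc_pi_mul_sq (by linarith))
            (Eventually.of_forall fun _ => sq_nonneg _)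
            (Ioi_subset_Ioi (Int.le_ceil x)).eventuallyLE
end

section
/- For all 0 < x < 1/n with n ≥ 1 an integer, sin(nπx)/(n sin(πx)) ≤ e^{−(n²−1)π²x²/6}; in particular (sin(nπx)/(n sin(πx)))² ≤ e^{−π(n²−1)x²} on (0,1/n). -/
open Real Filter Finset Topology

lemma key_ineq (a y : ℝ) (ha : 1 ≤ a) (hy : 0 ≤ y) (hay : a * y < 1) :
    (1 - a * y) / (1 - y) ≤ Real.exp (-((a - 1) * y)) := by
  have hy1 : y < 1 := lt_of_le_of_lt (le_mul_of_one_le_left hy ha) hay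
  have h1y : 0 < 1 - y := by linarith
  have step1 : (1 - a * y) / (1 - y) = -((a - 1) * y / (1 - y)) + 1 := by
    field_simp; ring
  rw [step1]
  calc -((a - 1) * y / (1 - y)) + 1 ≤ Real.exp (-((a - 1) * y / (1 - y))) :=
        Real.add_one_le_exp _
    _ ≤ Real.exp (-((a - 1) * y)) := by
        apply Real.exp_le_exp.mpr
        have h0 : 0 ≤ (a - 1) * y := mul_nonneg (by linarith) hy
        rw [neg_le_neg_iff]
        rw [le_div_iff₀ h1y]
        nlinarith

/-- For `0 < x < 1/n` (integer `n ≥ 1`),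
`sin(nπx)/(n sin(πx)) ≤ e^{-(n²-1)π²x²/6}`; in particular
`(sin(nπx)/(n sin(πx)))² ≤ e^{-π(n²-1)x²}`. -/
theorem stmt16 (n : ℕ) (hn : 1 ≤ n) (x : ℝ) (hx : x ∈ Set.Ioo (0 : ℝ) (1 / n)) :
    Real.sin (n * Real.pi * x) / (n * Real.sin (Real.pi * x)) ≤
      Real.exp (-((n : ℝ) ^ 2 - 1) * Real.pi ^ 2 * x ^ 2 / 6) ∧
    (Real.sin (n * Real.pi * x) / (n * Real.sin (Real.pi * x))) ^ 2 ≤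
      Real.exp (-Real.pi * ((n : ℝ) ^ 2 - 1) * x ^ 2) := by
  obtain ⟨hx0, hx1⟩ := hx
  set N : ℝ := (n : ℝ) with hNdef
  have hN1 : (1 : ℝ) ≤ N := by rw [hNdef]; exact_mod_cast hn
  have hN0 : (0 : ℝ) < N := by linarith
  have hNx : N * x < 1 := by
    rw [lt_div_iff₀ hN0] at hx1
    nlinarith
  have hNx0 : 0 < N * x := mul_pos hN0 hx0
  have hxlt1 : x < 1 := by nlinarith
  have hsinx : 0 < Real.sin (π * x) :=
    Real.sin_pos_of_pos_of_lt_pi (by positivity)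
      (by nlinarith [Real.pi_pos])
  have hsinNx : 0 ≤ Real.sin (π * (N * x)) :=
    Real.sin_nonneg_of_nonneg_of_le_pi (by positivity)
      (by nlinarith [Real.pi_pos])
  have hden : N * Real.sin (π * x) ≠ 0 := by positivity
  set c : ℝ := (N ^ 2 - 1) * x ^ 2 with hcdef
  have hc0 : 0 ≤ c := by
    apply mul_nonneg _ (sq_nonneg x); nlinarith
  -- partial products
  set f : ℕ → ℝ := fun m => ∏ j ∈ Finset.range m, ((1 : ℝ) - (N * x) ^ 2 / ((j : ℝ) + 1) ^ 2)
  set g : ℕ → ℝ := fun m => ∏ j ∈ Finset.range m, ((1 : ℝ) - x ^ 2 / ((j : ℝ) + 1) ^ 2)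
  have hA := Real.tendsto_euler_sin_prod (N * x)
  have hB := Real.tendsto_euler_sin_prod x
  have hRatio : Tendsto (fun m => f m / g m) atTop
      (𝓝 (Real.sin (N * π * x) / (N * Real.sin (π * x)))) := by
    have h1 : Tendsto (fun m => (π * (N * x) * f m) / (N * (π * x * g m))) atTop
        (𝓝 (Real.sin (π * (N * x)) / (N * Real.sin (π * x)))) :=
      hA.div (tendsto_const_nhds.mul hB) hden
    have heq : (fun m => (π * (N * x) * f m) / (N * (π * x * g m))) =
        fun m => f m / g m := by
      funext m
      have hpix : π * (N * x) ≠ 0 := by positivity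
      rw [show N * (π * x * g m) = π * (N * x) * g m by ring,
        mul_div_mul_left _ _ hpix]
    rw [heq, show π * (N * x) = N * π * x by ring] at h1
    exact h1
  -- termwise bound
  have hbound : ∀ m, f m / g m ≤ Real.exp (-c * ∑ j ∈ Finset.range m, 1 / ((j : ℝ) + 1) ^ 2) := by
    intro m
    rw [Finset.mul_sum, Real.exp_sum, ← Finset.prod_div_distrib]
    apply Finset.prod_le_prod
    · intro j _
      have hj1 : (1 : ℝ) ≤ ((j : ℝ) + 1) ^ 2 := by nlinarith [Nat.cast_nonneg (α := ℝ) j]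
      have h1 : (N * x) ^ 2 / ((j : ℝ) + 1) ^ 2 < 1 := by
        rw [div_lt_one (by positivity)]; nlinarith
      have h2 : x ^ 2 / ((j : ℝ) + 1) ^ 2 < 1 := by
        rw [div_lt_one (by positivity)]; nlinarith
      apply div_nonneg <;> linarith
    · intro j _
      have hj1 : (1 : ℝ) ≤ ((j : ℝ) + 1) ^ 2 := by nlinarith [Nat.cast_nonneg (α := ℝ) j]
      have hay : N ^ 2 * (x ^ 2 / ((j : ℝ) + 1) ^ 2) < 1 := by
        rw [show N ^ 2 * (x ^ 2 / ((j : ℝ) + 1) ^ 2) = (N * x) ^ 2 / ((j : ℝ) + 1) ^ 2 by ring,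
          div_lt_one (by positivity)]
        nlinarith
      have := key_ineq (N ^ 2) (x ^ 2 / ((j : ℝ) + 1) ^ 2) (by nlinarith)
        (by positivity) hay
      calc (1 - (N * x) ^ 2 / ((j : ℝ) + 1) ^ 2) / (1 - x ^ 2 / ((j : ℝ) + 1) ^ 2)
          = (1 - N ^ 2 * (x ^ 2 / ((j : ℝ) + 1) ^ 2)) / (1 - x ^ 2 / ((j : ℝ) + 1) ^ 2) := by
            ring_nf
        _ ≤ Real.exp (-((N ^ 2 - 1) * (x ^ 2 / ((j : ℝ) + 1) ^ 2))) := this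
        _ = Real.exp (-c * (1 / ((j : ℝ) + 1) ^ 2)) := by
            congr 1; rw [hcdef]; ring
  -- the sum tends to π²/6
  have hS : Tendsto (fun m => ∑ j ∈ Finset.range m, 1 / ((j : ℝ) + 1) ^ 2) atTop
      (𝓝 (π ^ 2 / 6)) := by
    have h := hasSum_zeta_two.tendsto_sum_nat
    have heq : ∀ m, ∑ j ∈ Finset.range (m + 1), (1 : ℝ) / (j : ℝ) ^ 2 =
        ∑ j ∈ Finset.range m, 1 / ((j : ℝ) + 1) ^ 2 := by
      intro m
      rw [Finset.sum_range_succ']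
      simp
    have := (h.comp (tendsto_add_atTop_nat 1))
    convert this using 2 with m
    exact (heq m).symm
  have hExp : Tendsto (fun m => Real.exp (-c * ∑ j ∈ Finset.range m, 1 / ((j : ℝ) + 1) ^ 2))
      atTop (𝓝 (Real.exp (-c * (π ^ 2 / 6)))) :=
    (Real.continuous_exp.tendsto _).comp (hS.const_mul (-c))
  have hmain : Real.sin (N * π * x) / (N * Real.sin (π * x)) ≤ Real.exp (-c * (π ^ 2 / 6)) :=
    le_of_tendsto_of_tendsto' hRatio hExp hbound
  have hmain' : Real.sin (N * π * x) / (N * Real.sin (π * x)) ≤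
      Real.exp (-(N ^ 2 - 1) * π ^ 2 * x ^ 2 / 6) := by
    convert hmain using 2
    rw [hcdef]; ring
  refine ⟨hmain', ?_⟩
  have hr0 : 0 ≤ Real.sin (N * π * x) / (N * Real.sin (π * x)) := by
    apply div_nonneg _ (by positivity)
    rw [show N * π * x = π * (N * x) by ring]
    exact hsinNx
  have hsq : (Real.sin (N * π * x) / (N * Real.sin (π * x))) ^ 2 ≤
      Real.exp (-(N ^ 2 - 1) * π ^ 2 * x ^ 2 / 6) ^ 2 := by
    exact pow_le_pow_left₀ hr0 hmain' 2
  refine hsq.trans ?_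
  rw [← Real.exp_nat_mul]
  apply Real.exp_le_exp.mpr
  have hpi3 : (3 : ℝ) < π := Real.pi_gt_three
  have hpi0 : 0 < π := Real.pi_pos
  push_cast
  nlinarith [mul_nonneg (mul_nonneg hpi0.le hc0) (show (0:ℝ) ≤ π - 3 by linarith)]
end

section
/- For all y ≥ π, (y+π)|sin y| ≤ 1.68 y. -/
/-!
Write `y = π + t`, so that `|sin y| = sin t`. Once `0.68 y ≥ π` the bound `|sin y| ≤ 1`
suffices; otherwise `t < 1.48`, and there the Taylor bound `sin t ≤ t - t³/6 + t⁵/120`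
together with `3.1415 < π < 3.1416` reduces the claim to a polynomial inequality with a
margin of about `0.01`.
-/

open Real

lemma le_of_hasDerivAt_le {f g f' g' : ℝ → ℝ} {a x : ℝ}
    (hf : ∀ y, HasDerivAt f (f' y) y) (hg : ∀ y, HasDerivAt g (g' y) y)
    (ha : f a ≤ g a) (hfg : ∀ y, a ≤ y → f' y ≤ g' y) (hx : a ≤ x) : f x ≤ g x :=
  image_le_of_deriv_right_le_deriv_boundary
    (fun y _ ↦ (hf y).continuousAt.continuousWithinAt) (fun y _ ↦ (hf y).hasDerivWithinAt) ha
    (fun y _ ↦ (hg y).continuousAt.continuousWithinAt) (fun y _ ↦ (hg y).hasDerivWithinAt)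
    (fun y hy ↦ hfg y hy.1) ⟨hx, le_rfl⟩

namespace Real

lemma cos_le_taylor_quartic {x : ℝ} (hx : 0 ≤ x) : cos x ≤ 1 - x ^ 2 / 2 + x ^ 4 / 24 := by
  refine le_of_hasDerivAt_le (g := fun y ↦ 1 - y ^ 2 / 2 + y ^ 4 / 24) (f' := fun y ↦ -sin y)
    (g' := fun y ↦ -y + y ^ 3 / 6) hasDerivAt_cos (fun y ↦ ?_) (by norm_num)
    (fun y hy ↦ ?_) hx
  · exact ((((hasDerivAt_pow 2 y).div_const 2).const_sub 1).add
      ((hasDerivAt_pow 4 y).div_const 24)).congr_deriv (by push_cast; ring)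
  · linarith [sin_ge_sub_cube hy]

lemma sin_le_taylor_quintic {x : ℝ} (hx : 0 ≤ x) : sin x ≤ x - x ^ 3 / 6 + x ^ 5 / 120 := by
  refine le_of_hasDerivAt_le (g := fun y ↦ y - y ^ 3 / 6 + y ^ 5 / 120) (f' := cos)
    (g' := fun y ↦ 1 - y ^ 2 / 2 + y ^ 4 / 24) hasDerivAt_sin (fun y ↦ ?_) (by norm_num)
    (fun y hy ↦ cos_le_taylor_quartic hy) hx
  exact (((hasDerivAt_id' y).sub ((hasDerivAt_pow 3 y).div_const 6)).add
    ((hasDerivAt_pow 5 y).div_const 120)).congr_deriv (by push_cast; ring)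

end Real

lemma add_mul_taylor_quintic_le {t : ℝ} (ht₀ : 0 ≤ t) (ht : t ≤ 1.48) :
    (t + 6.2832) * (t - t ^ 3 / 6 + t ^ 5 / 120) ≤ 1.68 * t + 5.27772 := by
  have hs := sub_nonneg.2 ht
  nlinarith [mul_nonneg ht₀ hs, mul_nonneg (mul_nonneg ht₀ ht₀) hs,
    mul_nonneg (pow_nonneg ht₀ 3) hs, mul_nonneg (pow_nonneg ht₀ 4) hs,
    mul_nonneg (pow_nonneg ht₀ 5) hs, mul_nonneg hs hs, mul_nonneg (mul_nonneg hs hs) ht₀,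
    sq_nonneg (t - 1), sq_nonneg (t * t - 1)]

lemma add_two_pi_mul_sin_le {t : ℝ} (ht₀ : 0 ≤ t) (ht : t ≤ 1.48) :
    (t + 2 * π) * sin t ≤ 1.68 * (t + π) := by
  have hsin₀ : 0 ≤ sin t := sin_nonneg_of_nonneg_of_le_pi ht₀ (by linarith [pi_gt_three])
  have hsin := sin_le_taylor_quintic ht₀
  calc (t + 2 * π) * sin t ≤ (t + 6.2832) * (t - t ^ 3 / 6 + t ^ 5 / 120) :=
        mul_le_mul (by linarith [pi_lt_d4]) hsin hsin₀ (by linarith)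
    _ ≤ 1.68 * t + 5.27772 := add_mul_taylor_quintic_le ht₀ ht
    _ ≤ 1.68 * (t + π) := by linarith [pi_gt_d4]

/-- For all `y ≥ π`, `(y+π)|sin y| ≤ 1.68 y`. -/
theorem stmt17 (y : ℝ) (hy : Real.pi ≤ y) :
    (y + Real.pi) * |Real.sin y| ≤ 1.68 * y := by
  rcases le_or_gt π (0.68 * y) with hlarge | hsmall
  · calc (y + π) * |sin y| ≤ y + π :=
          mul_le_of_le_one_right (by linarith [pi_pos]) (abs_sin_le_one y)
      _ ≤ 1.68 * y := by linarith
  · have hsin : sin y ≤ 0 := by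
      have := sin_nonneg_of_nonneg_of_le_pi (x := y - π) (by linarith) (by linarith [pi_lt_d4])
      rwa [sin_sub_pi, neg_nonneg] at this
    calc (y + π) * |sin y| = (y - π + 2 * π) * sin (y - π) := by
          rw [abs_of_nonpos hsin, sin_sub_pi]; ring
      _ ≤ 1.68 * (y - π + π) := add_two_pi_mul_sin_le (by linarith) (by linarith [pi_lt_d4])
      _ = 1.68 * y := by ring
end

section
/- For all x ≥ 1/2, Erfc(x) ≤ e^{−x²}/6 + e^{−4x²/3}/2, where Erfc(x) = (2/√π)∫_x^∞ e^{−t²} dt. -/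
/-
Write the right-hand side as `∫_x^∞ e^{-t²} w(t) dt` with `w(t) = t/3 + (4t/3) e^{-t²/3}`; the
claim becomes `F(x) = ∫_x^∞ e^{-t²} (w(t) - 2/√π) dt ≥ 0`. For `t ≥ 0.81` the integrand is
nonnegative: on `[0.81, 3.4]` this follows from the tangent-line bounds of `e^{-u}` at
`u = 1/4, 1, 2, 3`, and beyond `3.4` already `t/3 > 2/√π`. For `1/2 ≤ x < 0.81` write
`F(x) = F(1/2) - ∫_{1/2}^x`: the integrand is at most `0.0117` there, while `F(1/2) > 0.0069`
because `Erfc(1/2) = 1 - (2/√π) ∫_0^{1/2} e^{-t²}` and a Taylor bound controls the last integral.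
-/

open MeasureTheory Set Real Filter

lemma abs_exp_neg_sub_quadratic_le {u : ℝ} (h0 : 0 ≤ u) (h1 : u ≤ 1) :
    |exp (-u) - (1 - u + u ^ 2 / 2)| ≤ 2 * u ^ 3 / 9 := by
  have h := Real.exp_bound (x := -u) (by rwa [abs_neg, abs_of_nonneg h0]) (n := 3) (by norm_num)
  rw [abs_neg, abs_of_nonneg h0] at h
  convert h using 2
  · simp [Finset.sum_range_succ, Nat.factorial]; ring
  · norm_num [Nat.factorial]; ring

lemma exp_neg_quarter_gt : 0.7777 < exp (-(1 / 4)) := by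
  have := abs_le.1 (abs_exp_neg_sub_quadratic_le (u := 1 / 4) (by norm_num) (by norm_num))
  linarith [this.1]

lemma exp_neg_mul_one_add_sub_le (k u : ℝ) : exp (-k) * (1 + k - u) ≤ exp (-u) := by
  have h := add_one_le_exp (k - u)
  calc exp (-k) * (1 + k - u) ≤ exp (-k) * exp (k - u) := by gcongr; linarith
    _ = exp (-u) := by rw [← exp_add]; ring_nf

lemma two_div_sqrt_pi_lt : 2 / √π < 1.1284 := by
  have : (1.77245 : ℝ) < √π := by
    rw [lt_sqrt (by norm_num)]; linarith [pi_gt_d6]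
  rw [div_lt_iff₀ (by positivity)]; linarith

lemma lt_two_div_sqrt_pi : 1.1283 < 2 / √π := by
  have : √π < 1.77246 := by
    rw [sqrt_lt' (by norm_num)]; linarith [pi_lt_d6]
  rw [lt_div_iff₀ (by positivity)]; linarith

lemma integrable_exp_neg_sq : Integrable fun t : ℝ ↦ exp (-t ^ 2) := by
  simpa using integrable_exp_neg_mul_sq one_pos

lemma integral_Ioi_mul_exp_neg_mul_sq {b : ℝ} (hb : 0 < b) (a : ℝ) :
    ∫ t in Ioi a, t * exp (-b * t ^ 2) = exp (-b * a ^ 2) / (2 * b) := by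
  have hderiv (t : ℝ) : HasDerivAt (fun t ↦ -exp (-b * t ^ 2) / (2 * b))
      (t * exp (-b * t ^ 2)) t := by
    refine (((hasDerivAt_pow 2 t).const_mul (-b)).exp.neg.div_const (2 * b)).congr_deriv ?_
    field_simp
    ring
  have hlim : Tendsto (fun t : ℝ ↦ -exp (-b * t ^ 2) / (2 * b)) atTop (nhds 0) := by
    have : Tendsto (fun t : ℝ ↦ -b * t ^ 2) atTop atBot :=
      (tendsto_pow_atTop two_ne_zero).const_mul_atTop_of_neg (neg_lt_zero.2 hb)
    simpa using ((tendsto_exp_atBot.comp this).neg).div_const (2 * b)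
  rw [integral_Ioi_of_hasDerivAt_of_tendsto' (fun t _ ↦ hderiv t)
    (integrable_mul_exp_neg_mul_sq hb).integrableOn hlim]
  ring

lemma integral_exp_neg_sq_zero_half_gt : 0.4612 < ∫ t in (0 : ℝ)..1 / 2, exp (-t ^ 2) := by
  have hle : ∀ t ∈ Icc (0 : ℝ) (1 / 2), 1 - t ^ 2 + t ^ 4 / 2 - 2 * t ^ 6 / 9 ≤ exp (-t ^ 2) := by
    rintro t ⟨h0, h1⟩
    have := abs_le.1 (abs_exp_neg_sub_quadratic_le (u := t ^ 2) (by positivity) (by nlinarith))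
    linarith [this.1]
  have hpoly : ∫ t in (0 : ℝ)..1 / 2, (1 - t ^ 2 + t ^ 4 / 2 - 2 * t ^ 6 / 9) = 4649 / 10080 := by
    rw [intervalIntegral.integral_sub, intervalIntegral.integral_add, intervalIntegral.integral_sub,
      intervalIntegral.integral_div, intervalIntegral.integral_div,
      intervalIntegral.integral_const_mul]
    · norm_num [integral_pow]
    all_goals exact (by fun_prop : Continuous _).intervalIntegrable _ _
  calc (0.4612 : ℝ) < 4649 / 10080 := by norm_num
    _ = ∫ t in (0 : ℝ)..1 / 2, (1 - t ^ 2 + t ^ 4 / 2 - 2 * t ^ 6 / 9) := hpoly.symm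
    _ ≤ ∫ t in (0 : ℝ)..1 / 2, exp (-t ^ 2) :=
      intervalIntegral.integral_mono_on (by norm_num)
        ((by fun_prop : Continuous _).intervalIntegrable _ _)
        ((by fun_prop : Continuous _).intervalIntegrable _ _) hle

noncomputable def cdsWeight (t : ℝ) : ℝ := t / 3 + 4 * t / 3 * exp (-(t ^ 2 / 3))

lemma exp_neg_sq_mul_cdsWeight (t : ℝ) :
    exp (-t ^ 2) * cdsWeight t =
      1 / 3 * (t * exp (-1 * t ^ 2)) + 4 / 3 * (t * exp (-(4 / 3) * t ^ 2)) := by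
  have : exp (-t ^ 2) * exp (-(t ^ 2 / 3)) = exp (-(4 / 3) * t ^ 2) := by
    rw [← exp_add]; ring_nf
  unfold cdsWeight
  rw [neg_one_mul]
  linear_combination 4 * t / 3 * this

lemma integrable_exp_neg_sq_mul_cdsWeight : Integrable fun t ↦ exp (-t ^ 2) * cdsWeight t := by
  simp_rw [exp_neg_sq_mul_cdsWeight]
  exact ((integrable_mul_exp_neg_mul_sq one_pos).const_mul _).add
    ((integrable_mul_exp_neg_mul_sq (by norm_num)).const_mul _)

lemma integral_Ioi_exp_neg_sq_mul_cdsWeight (x : ℝ) :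
    ∫ t in Ioi x, exp (-t ^ 2) * cdsWeight t = exp (-x ^ 2) / 6 + exp (-4 * x ^ 2 / 3) / 2 := by
  simp_rw [exp_neg_sq_mul_cdsWeight]
  rw [integral_add, integral_const_mul, integral_const_mul,
    integral_Ioi_mul_exp_neg_mul_sq one_pos, integral_Ioi_mul_exp_neg_mul_sq (by norm_num)]
  · ring_nf
  · exact ((integrable_mul_exp_neg_mul_sq one_pos).const_mul _).integrableOn
  · exact ((integrable_mul_exp_neg_mul_sq (by norm_num)).const_mul _).integrableOn

lemma le_cdsWeight_of_tangent {k E lo hi t c : ℝ} (hE : E ≤ exp (-k)) (hE0 : 0 ≤ E)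
    (hlo0 : 0 ≤ lo) (hlo : lo ≤ t) (hhi : t ≤ hi) (hk : hi ^ 2 / 3 ≤ 1 + k)
    (hclo : c ≤ lo / 3 + 4 * lo / 3 * (E * (1 + k - lo ^ 2 / 3)))
    (hchi : c ≤ hi / 3 + 4 * hi / 3 * (E * (1 + k - hi ^ 2 / 3))) :
    c ≤ cdsWeight t := by
  have hu : 0 ≤ 1 + k - t ^ 2 / 3 := by nlinarith
  have htan : E * (1 + k - t ^ 2 / 3) ≤ exp (-(t ^ 2 / 3)) :=
    (mul_le_mul_of_nonneg_right hE hu).trans (exp_neg_mul_one_add_sub_le k _)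
  have hq : c ≤ t / 3 + 4 * t / 3 * (E * (1 + k - t ^ 2 / 3)) := by
    rcases hlo.eq_or_lt with rfl | hlt
    · exact hclo
    -- the cubic is concave on `[0, ∞)`, so it lies above its chord
    have hchord : (hi - lo) * (t / 3 + 4 * t / 3 * (E * (1 + k - t ^ 2 / 3))) -
        (hi - t) * (lo / 3 + 4 * lo / 3 * (E * (1 + k - lo ^ 2 / 3))) -
        (t - lo) * (hi / 3 + 4 * hi / 3 * (E * (1 + k - hi ^ 2 / 3))) =
        4 * E / 9 * (hi - lo) * ((t - lo) * (hi - t) * (t + lo + hi)) := by ring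
    have hpos : 0 ≤ 4 * E / 9 * (hi - lo) * ((t - lo) * (hi - t) * (t + lo + hi)) := by
      have := mul_nonneg (mul_nonneg (sub_nonneg.2 hlo) (sub_nonneg.2 hhi))
        (by linarith : 0 ≤ t + lo + hi)
      have : 0 ≤ hi - lo := by linarith
      positivity
    nlinarith [mul_le_mul_of_nonneg_left hclo (sub_nonneg.2 hhi),
      mul_le_mul_of_nonneg_left hchi (sub_nonneg.2 hlt.le)]
  unfold cdsWeight
  nlinarith [mul_le_mul_of_nonneg_left htan (by linarith : 0 ≤ 4 * t / 3)]

lemma two_div_sqrt_pi_le_cdsWeight {t : ℝ} (ht : 0.81 ≤ t) : 2 / √π ≤ cdsWeight t := by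
  have hc := two_div_sqrt_pi_lt
  have e1 : (0.367879 : ℝ) ≤ exp (-1) := by linarith [exp_neg_one_gt_d9]
  have e2 : (0.1353 : ℝ) ≤ exp (-2) := by
    rw [show (-2 : ℝ) = -1 + -1 by norm_num, exp_add]
    nlinarith
  have e3 : (0.0497 : ℝ) ≤ exp (-3) := by
    rw [show (-3 : ℝ) = -1 + -2 by norm_num, exp_add]
    nlinarith
  rcases le_total t 1 with h1 | h1
  · exact le_cdsWeight_of_tangent exp_neg_quarter_gt.le (by norm_num) (by norm_num)
      ht h1 (by norm_num) (by norm_num; linarith) (by norm_num; linarith)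
  rcases le_total t 2 with h2 | h2
  · exact le_cdsWeight_of_tangent e1 (by norm_num) (by norm_num)
      h1 h2 (by norm_num) (by norm_num; linarith) (by norm_num; linarith)
  rcases le_total t 2.7 with h3 | h3
  · exact le_cdsWeight_of_tangent e2 (by norm_num) (by norm_num)
      h2 h3 (by norm_num) (by norm_num; linarith) (by norm_num; linarith)
  rcases le_total t 3.4 with h4 | h4
  · exact le_cdsWeight_of_tangent e3 (by norm_num) (by norm_num)
      h3 h4 (by norm_num) (by norm_num; linarith) (by norm_num; linarith)
  unfold cdsWeight
  nlinarith [exp_pos (-(t ^ 2 / 3))]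

lemma cdsWeight_le {t : ℝ} (h0 : 0 ≤ t) (h1 : t ≤ 0.81) : cdsWeight t ≤ 1.14 := by
  set u := t ^ 2 / 3 with hu
  have hu0 : 0 ≤ u := by positivity
  have hexp : exp (-u) * (1 + u + u ^ 2 / 2) ≤ 1 := by
    have := quadratic_le_exp_of_nonneg hu0
    calc exp (-u) * (1 + u + u ^ 2 / 2) ≤ exp (-u) * exp u := by gcongr
      _ = 1 := by rw [← exp_add]; simp
  have hpoly : 4 * t ≤ (3.42 - t) * (1 + u + u ^ 2 / 2) := by
    rw [hu]
    nlinarith [mul_nonneg h0 (sub_nonneg.2 h1), mul_nonneg (mul_nonneg h0 h0) (sub_nonneg.2 h1)]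
  unfold cdsWeight
  rw [← hu]
  nlinarith [exp_pos (-u), mul_le_mul_of_nonneg_left hexp (by linarith : (0 : ℝ) ≤ 4 * t)]

noncomputable def cdsGap (t : ℝ) : ℝ := exp (-t ^ 2) * cdsWeight t - 2 / √π * exp (-t ^ 2)

lemma integrable_cdsGap : Integrable cdsGap :=
  integrable_exp_neg_sq_mul_cdsWeight.sub (integrable_exp_neg_sq.const_mul _)

lemma integral_Ioi_cdsGap (x : ℝ) :
    ∫ t in Ioi x, cdsGap t = exp (-x ^ 2) / 6 + exp (-4 * x ^ 2 / 3) / 2 -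
      2 / √π * ∫ t in Ioi x, exp (-t ^ 2) := by
  unfold cdsGap
  rw [integral_sub integrable_exp_neg_sq_mul_cdsWeight.integrableOn, integral_const_mul,
    integral_Ioi_exp_neg_sq_mul_cdsWeight]
  exact (integrable_exp_neg_sq.const_mul _).integrableOn

lemma cdsGap_nonneg {t : ℝ} (ht : 0.81 ≤ t) : 0 ≤ cdsGap t := by
  unfold cdsGap
  nlinarith [exp_pos (-t ^ 2), two_div_sqrt_pi_le_cdsWeight ht]

lemma cdsGap_le {t : ℝ} (h0 : 0 ≤ t) (h1 : t ≤ 0.81) : cdsGap t ≤ 0.0117 := by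
  have hexp : exp (-t ^ 2) ≤ 1 := exp_le_one_iff.2 (by nlinarith)
  unfold cdsGap
  nlinarith [exp_pos (-t ^ 2), cdsWeight_le h0 h1, lt_two_div_sqrt_pi]

lemma integral_Ioi_half_cdsGap_gt : 0.0069 < ∫ t in Ioi (1 / 2), cdsGap t := by
  have hsplit := intervalIntegral.integral_interval_add_Ioi (a := 0) (b := 1 / 2)
    integrable_exp_neg_sq.integrableOn integrable_exp_neg_sq.integrableOn
  have hgauss : ∫ t in Ioi (0 : ℝ), exp (-t ^ 2) = √π / 2 := by
    simpa using integral_gaussian_Ioi 1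
  have hc : 2 / √π * (√π / 2) = 1 := by field_simp
  have e1 : 0.7777 < exp (-(1 / 2 : ℝ) ^ 2) := by
    rw [show (1 / 2 : ℝ) ^ 2 = 1 / 4 by norm_num]; exact exp_neg_quarter_gt
  have e2 : 0.7139 < exp (-4 * (1 / 2 : ℝ) ^ 2 / 3) := by
    have := abs_le.1 (abs_exp_neg_sub_quadratic_le (u := 1 / 3) (by norm_num) (by norm_num))
    rw [show -4 * (1 / 2 : ℝ) ^ 2 / 3 = -(1 / 3) by norm_num]
    linarith [this.1]
  have hI := integral_exp_neg_sq_zero_half_gt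
  have hq := lt_two_div_sqrt_pi
  rw [integral_Ioi_cdsGap, eq_sub_of_add_eq' hsplit, hgauss, mul_sub, hc]
  nlinarith [mul_lt_mul'' hq hI (by norm_num) (by norm_num)]

lemma integral_Ioi_cdsGap_nonneg {x : ℝ} (hx : 1 / 2 ≤ x) : 0 ≤ ∫ t in Ioi x, cdsGap t := by
  rcases le_total 0.81 x with h | h
  · exact setIntegral_nonneg measurableSet_Ioi fun t ht ↦ cdsGap_nonneg (h.trans ht.out.le)
  have hsplit := intervalIntegral.integral_interval_add_Ioi (a := 1 / 2) (b := x)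
    integrable_cdsGap.integrableOn integrable_cdsGap.integrableOn
  have hmid : ∫ t in (1 / 2 : ℝ)..x, cdsGap t ≤ 0.0117 * (x - 1 / 2) := by
    calc ∫ t in (1 / 2 : ℝ)..x, cdsGap t ≤ ∫ _ in (1 / 2 : ℝ)..x, (0.0117 : ℝ) :=
          intervalIntegral.integral_mono_on hx integrable_cdsGap.intervalIntegrable
            intervalIntegrable_const fun t ht ↦ cdsGap_le (by linarith [ht.1]) (ht.2.trans h)
      _ = 0.0117 * (x - 1 / 2) := by simp [mul_comm]
  linarith [integral_Ioi_half_cdsGap_gt]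

/-- Chiani–Dardari–Simon bound: for `x ≥ 1/2`,
`Erfc(x) ≤ e^{-x²}/6 + e^{-4x²/3}/2`, where `Erfc(x) = (2/√π) ∫_x^∞ e^{-t²} dt`. -/
theorem stmt18 (x : ℝ) (hx : 1 / 2 ≤ x) :
    (2 / Real.sqrt Real.pi) * ∫ t in Set.Ioi x, Real.exp (-t ^ 2) ≤
      Real.exp (-x ^ 2) / 6 + Real.exp (-4 * x ^ 2 / 3) / 2 := by
  have := integral_Ioi_cdsGap_nonneg hx
  rw [integral_Ioi_cdsGap] at this
  linarith
end
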